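/- arXiv:2004.02053 — 2 statements merged into one kernel-verified Lean document; each statement's English description precedes it below -/
import Mathlib

section
/- Let F be an N×N real antisymmetric matrix with F·𝟙 = 0 and let F₊ be its entrywise positive part (F₊)ᵢⱼ = max(Fᵢⱼ, 0). If 𝟙ᵀF₊𝟙 = 1 and every entry of the row vector 𝟙ᵀF₊ is positive, then setting P = F₊ and π := Pᵀ𝟙, the matrix Π := diag(π)⁻¹P is row-stochastic (nonnegative entries, Π𝟙 = 𝟙), has stationary distribution π (πᵀΠ = πᵀ), and satisfies P − Pᵀ = F. -/
open Matrix

/-- An antisymmetric F with F𝟙 = 0, total positive part mass 1 and positive column sums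
of F₊ arises as the net flux of a Markov chain with P = F₊, π = Pᵀ𝟙, Π = diag(π)⁻¹P. -/
theorem stmt_1 {N : ℕ} (F : Matrix (Fin N) (Fin N) ℝ)
    (hanti : Fᵀ = -F)
    (hdiv : F *ᵥ (fun _ => (1:ℝ)) = 0)
    (Fp : Matrix (Fin N) (Fin N) ℝ)
    (hFp : Fp = Matrix.of fun i j => max (F i j) 0)
    (htotal : ∑ i, ∑ j, Fp i j = 1)
    (hcols : ∀ j, 0 < ∑ i, Fp i j)
    (P : Matrix (Fin N) (Fin N) ℝ) (hP : P = Fp)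
    (pi' : Fin N → ℝ) (hpi : pi' = Pᵀ *ᵥ (fun _ => (1:ℝ)))
    (Pim : Matrix (Fin N) (Fin N) ℝ)
    (hPim : Pim = Matrix.of fun i j => P i j / pi' i) :
    (∀ i j, 0 ≤ Pim i j) ∧
    (Pim *ᵥ (fun _ => (1:ℝ)) = fun _ => 1) ∧
    (pi' ᵥ* Pim = pi') ∧
    (P - Pᵀ = F) := by
  subst hFp hP hpi hPim
  -- basic facts
  have hskew : ∀ i j, F j i = - F i j := by
    intro i j
    have := congrFun (congrFun hanti i) j
    simpa [Matrix.transpose_apply] using this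
  have hpi_eq : ∀ i, ((Matrix.of fun i j => max (F i j) 0)ᵀ *ᵥ (fun _ => (1:ℝ))) i
      = ∑ j, max (F j i) 0 := by
    intro i
    simp [Matrix.mulVec, dotProduct, Matrix.transpose_apply]
  have hpos : ∀ i, 0 < ((Matrix.of fun i j => max (F i j) 0)ᵀ *ᵥ (fun _ => (1:ℝ))) i := by
    intro i
    rw [hpi_eq]
    simpa [Matrix.of_apply] using hcols i
  have hrowsum : ∀ i, ∑ j, max (F i j) 0 = ∑ j, max (F j i) 0 := by
    intro i
    have hdi : ∑ j, F i j = 0 := by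
      have := congrFun hdiv i
      simpa [Matrix.mulVec, dotProduct] using this
    have : ∑ j, (max (F i j) 0 - max (F j i) 0) = 0 := by
      have h1 : ∀ j, max (F i j) 0 - max (F j i) 0 = F i j := by
        intro j
        rw [hskew i j]
        rcases le_total (F i j) 0 with h | h
        · simp [max_eq_right h, max_eq_left (neg_nonneg.mpr h)]
        · simp [max_eq_left h, max_eq_right (neg_nonpos.mpr h)]
      simp only [h1]; exact hdi
    have := Finset.sum_sub_distrib (f := fun j => max (F i j) 0)
      (g := fun j => max (F j i) 0) (s := Finset.univ) ▸ this
    linarith [this]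
  refine ⟨?_, ?_, ?_, ?_⟩
  · intro i j
    simp only [Matrix.of_apply]
    exact div_nonneg (le_max_right _ _) (le_of_lt (hpos i))
  · funext i
    have hne := (hpos i).ne'
    have : ∑ j, max (F i j) 0 / ((Matrix.of fun i j => max (F i j) 0)ᵀ *ᵥ (fun _ => (1:ℝ))) i
        = 1 := by
      rw [← Finset.sum_div, hpi_eq i, hrowsum i, div_self]
      rw [hpi_eq i] at hne; exact hne
    simpa [Matrix.mulVec, dotProduct, Matrix.of_apply] using this
  · funext j
    have : ∑ i, ((Matrix.of fun i j => max (F i j) 0)ᵀ *ᵥ (fun _ => (1:ℝ))) i *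
        (max (F i j) 0 / ((Matrix.of fun i j => max (F i j) 0)ᵀ *ᵥ (fun _ => (1:ℝ))) i)
        = ((Matrix.of fun i j => max (F i j) 0)ᵀ *ᵥ (fun _ => (1:ℝ))) j := by
      have h1 : ∀ i ∈ Finset.univ, ((Matrix.of fun i j => max (F i j) 0)ᵀ *ᵥ (fun _ => (1:ℝ))) i *
          (max (F i j) 0 / ((Matrix.of fun i j => max (F i j) 0)ᵀ *ᵥ (fun _ => (1:ℝ))) i)
          = max (F i j) 0 := by
        intro i _
        field_simp [(hpos i).ne']
      rw [Finset.sum_congr rfl h1, hpi_eq j]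
    simpa [Matrix.vecMul, dotProduct, Matrix.of_apply] using this
  · funext i j
    simp only [Matrix.sub_apply, Matrix.transpose_apply, Matrix.of_apply]
    rw [hskew i j]
    rcases le_total (F i j) 0 with h | h
    · simp [max_eq_right h, max_eq_left (neg_nonneg.mpr h)]
    · simp [max_eq_left h, max_eq_right (neg_nonpos.mpr h)]
end

section
/- Let F be an N×N real antisymmetric matrix with F𝟙 = 0, F₊ its entrywise positive part with 𝟙ᵀF₊𝟙 < 1, and let M be an N×N symmetric matrix with nonnegative entries and all diagonal entries positive such that 𝟙ᵀM𝟙 = 1 − 𝟙ᵀF₊𝟙. Then P := M + F₊ satisfies P𝟙 = Pᵀ𝟙, and with π := Pᵀ𝟙 (all entries positive), Π := diag(π)⁻¹P is row-stochastic with πᵀΠ = πᵀ and P − Pᵀ = F. -/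
open Matrix

/-- Realizing a divergence-free antisymmetric F with 𝟙ᵀF₊𝟙 < 1 as the net flux of a
Markov chain, via P = M + F₊ for suitable symmetric nonnegative M. -/
theorem stmt_2 {N : ℕ} (F : Matrix (Fin N) (Fin N) ℝ)
    (hanti : Fᵀ = -F)
    (hdiv : F *ᵥ (fun _ => (1:ℝ)) = 0)
    (Fp : Matrix (Fin N) (Fin N) ℝ)
    (hFp : Fp = Matrix.of fun i j => max (F i j) 0)
    (htotal : ∑ i, ∑ j, Fp i j < 1)
    (M : Matrix (Fin N) (Fin N) ℝ)
    (hMsymm : Mᵀ = M)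
    (hMnn : ∀ i j, 0 ≤ M i j)
    (hMdiag : ∀ i, 0 < M i i)
    (hMmass : ∑ i, ∑ j, M i j = 1 - ∑ i, ∑ j, Fp i j)
    (P : Matrix (Fin N) (Fin N) ℝ) (hP : P = M + Fp)
    (pi' : Fin N → ℝ) (hpi : pi' = Pᵀ *ᵥ (fun _ => (1:ℝ)))
    (Pim : Matrix (Fin N) (Fin N) ℝ)
    (hPim : Pim = Matrix.of fun i j => P i j / pi' i) :
    (P *ᵥ (fun _ => (1:ℝ)) = Pᵀ *ᵥ (fun _ => (1:ℝ))) ∧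
    (∀ i, 0 < pi' i) ∧
    (∀ i j, 0 ≤ Pim i j) ∧
    (Pim *ᵥ (fun _ => (1:ℝ)) = fun _ => 1) ∧
    (pi' ᵥ* Pim = pi') ∧
    (P - Pᵀ = F) := by
  have hF : P - Pᵀ = F := by
    ext i j
    have h1 : F j i = -F i j := by
      have := congrFun (congrFun hanti i) j
      simpa [Matrix.transpose_apply] using this
    have hM' : M j i = M i j := by
      have := congrFun (congrFun hMsymm i) j
      simpa [Matrix.transpose_apply] using this
    simp only [hP, hFp, Matrix.sub_apply, Matrix.transpose_apply, Matrix.add_apply,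
      Matrix.of_apply]
    rw [hM', h1]
    rcases le_total (F i j) 0 with h | h
    · rw [max_eq_right h, max_eq_left (by linarith)]; ring
    · rw [max_eq_left h, max_eq_right (by linarith)]; ring
  have hrow : P *ᵥ (fun _ => (1:ℝ)) = Pᵀ *ᵥ (fun _ => (1:ℝ)) :=
    sub_eq_zero.mp (by rw [← Matrix.sub_mulVec, hF]; exact hdiv)
  have hPnn : ∀ i j, 0 ≤ P i j := by
    intro i j
    simp only [hP, hFp, Matrix.add_apply, Matrix.of_apply]
    exact add_nonneg (hMnn i j) (le_max_right _ _)
  have hpi_col : ∀ i, pi' i = ∑ j, P j i := by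
    intro i
    simp [hpi, Matrix.mulVec, dotProduct, Matrix.transpose_apply]
  have hpi_row : ∀ i, pi' i = ∑ j, P i j := by
    intro i
    rw [hpi, ← hrow]
    simp [Matrix.mulVec, dotProduct]
  have hpos : ∀ i, 0 < pi' i := by
    intro i
    rw [hpi_col i]
    apply Finset.sum_pos' (fun j _ => hPnn j i)
    refine ⟨i, Finset.mem_univ i, ?_⟩
    have : 0 ≤ Fp i i := by simp [hFp]
    have := hMdiag i
    simp only [hP, Matrix.add_apply]
    linarith
  refine ⟨hrow, hpos, ?_, ?_, ?_, hF⟩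
  · intro i j
    rw [hPim]
    exact div_nonneg (hPnn i j) (hpos i).le
  · funext i
    have : (Pim *ᵥ (fun _ => (1:ℝ))) i = (∑ j, P i j) / pi' i := by
      simp [hPim, Matrix.mulVec, dotProduct, Finset.sum_div]
    rw [this, ← hpi_row i, div_self (hpos i).ne']
  · funext j
    have : (pi' ᵥ* Pim) j = ∑ i, pi' i * (P i j / pi' i) := by
      simp [hPim, Matrix.vecMul, dotProduct]
    rw [this]
    rw [hpi_col j]
    apply Finset.sum_congr rfl
    intro i _
    field_simp [(hpos i).ne']
end
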